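/- Let {Q_θ : θ ∈ Θ} be a family of probability measures on Â and let (Xₙ; n≥1) be a stationary and ergodic source with X₁ ∼ P. Fix D ≥ 0 and suppose there exist Δ > 0 and a measurable K ⊆ A with P(K) > D/(D+Δ). For ε > 0 set T_ε := {θ ∈ Θ : Q_θ(B(K, D+Δ)) ≥ ε}. Then for each ε ∈ (0,1), with probability 1, liminf_{n→∞} inf_{θ ∈ T_ε^c} R₁(P_{X₁ⁿ}, Q_θ, D) ≥ (D/(D+Δ)) log ε − P(K) log(2ε), and consequently, with probability 1, lim_{ε↓0} liminf_{n→∞} inf_{θ ∈ T_ε^c} R₁(P_{X₁ⁿ}, Q_θ, D) = ∞ (with the convention inf ∅ := +∞). -/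

import Mathlib

open MeasureTheory ProbabilityTheory Filter Topology Set
open scoped ENNReal NNReal

noncomputable section

open scoped Classical in
/-- Relative entropy `H(μ‖ν)`, with values in `ℝ≥0∞` and the convention that it is `∞`
unless `μ ≪ ν` and the log-likelihood ratio is integrable. -/
def relEnt {X : Type*} [MeasurableSpace X] (μ ν : Measure X) : ℝ≥0∞ :=
  if μ ≪ ν ∧ Integrable (llr μ ν) μ then ENNReal.ofReal (∫ x, llr μ ν x ∂μ) else ⊤

/-- The set `W(P,D)` of couplings with first marginal `P` and expected distortion at most `D`. -/
def Wset {A B : Type*} [MeasurableSpace A] [MeasurableSpace B]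
    (ρ : A → B → ℝ) (P : Measure A) (D : ℝ) : Set (Measure (A × B)) :=
  {W | IsProbabilityMeasure W ∧ W.fst = P ∧
    ∫⁻ p, ENNReal.ofReal (ρ p.1 p.2) ∂W ≤ ENNReal.ofReal D}

/-- `R₁(P,Q,D) := inf_{W ∈ W(P,D)} H(W ‖ P × Q)`, with `inf ∅ = ∞`. -/
def RQ {A B : Type*} [MeasurableSpace A] [MeasurableSpace B]
    (ρ : A → B → ℝ) (P : Measure A) (Q : Measure B) (D : ℝ) : ℝ≥0∞ :=
  ⨅ W ∈ Wset ρ P D, relEnt W (P.prod Q)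

/-- `R₁^Θ(P,D) := inf_θ R₁(P,Q_θ,D)`. -/
def RTh {A B Θ : Type*} [MeasurableSpace A] [MeasurableSpace B]
    (ρ : A → B → ℝ) (Q : Θ → Measure B) (P : Measure A) (D : ℝ) : ℝ≥0∞ :=
  ⨅ θ : Θ, RQ ρ P (Q θ) D

/-- The (first-order) rate-distortion function
`R₁(P,D) := inf_{W ∈ W(P,D)} H(W ‖ W^A × W^Â)`, with `inf ∅ = ∞`. -/
def Rnp {A B : Type*} [MeasurableSpace A] [MeasurableSpace B]
    (ρ : A → B → ℝ) (P : Measure A) (D : ℝ) : ℝ≥0∞ :=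
  ⨅ W ∈ Wset ρ P D, relEnt W (W.fst.prod W.snd)

/-- The empirical distribution of `(x 0, …, x (n-1))`. -/
def empMeas {A : Type*} [MeasurableSpace A] (x : ℕ → A) (n : ℕ) : Measure A :=
  (n : ℝ≥0∞)⁻¹ • ∑ k ∈ Finset.range n, Measure.dirac (x k)

/-- The shift map on sequences. -/
def shift {A : Type*} : (ℕ → A) → (ℕ → A) := fun x n => x (n + 1)

/-- `D_c^Θ(P)`: the set of distortion levels where `D ↦ R₁^Θ(P,D)` is continuous from the
left (the left limit being the infimum over `λ ∈ (0,1)` of `R₁^Θ(P,λD)`, by monotonicity),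
with the conventions that `0 ∈ D_c^Θ(P)` and that `D ∈ D_c^Θ(P)` whenever `R₁^Θ(P,D) = ∞`. -/
def DcTh {A B Θ : Type*} [MeasurableSpace A] [MeasurableSpace B]
    (ρ : A → B → ℝ) (Q : Θ → Measure B) (P : Measure A) : Set ℝ :=
  {D | 0 ≤ D ∧ (D = 0 ∨ RTh ρ Q P D = ⊤ ∨
    RTh ρ Q P D = ⨅ l ∈ Set.Ioo (0:ℝ) 1, RTh ρ Q P (l * D))}

/-- `D_c(P)` for the rate-distortion function. -/
def DcNp {A B : Type*} [MeasurableSpace A] [MeasurableSpace B]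
    (ρ : A → B → ℝ) (P : Measure A) : Set ℝ :=
  {D | 0 ≤ D ∧ (D = 0 ∨ Rnp ρ P D = ⊤ ∨
    Rnp ρ P D = ⨅ l ∈ Set.Ioo (0:ℝ) 1, Rnp ρ P (l * D))}

/-- `D_c(P,Q)` for `R₁(P,Q,·)`. -/
def DcQ {A B : Type*} [MeasurableSpace A] [MeasurableSpace B]
    (ρ : A → B → ℝ) (P : Measure A) (Q : Measure B) : Set ℝ :=
  {D | 0 ≤ D ∧ (D = 0 ∨ RQ ρ P Q D = ⊤ ∨
    RQ ρ P Q D = ⨅ l ∈ Set.Ioo (0:ℝ) 1, RQ ρ P Q (l * D))}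

/-- The union of distortion balls of radius `M` centered at points of `K`. -/
def Bset {A B : Type*} (ρ : A → B → ℝ) (K : Set A) (M : ℝ) : Set B :=
  {y | ∃ x ∈ K, ρ x y ≤ M}

/-!
For a coupling `W` of `P` with expected distortion at most `D`, Markov's inequality leaves mass at
most `D/(D+Δ)` on `K × Â` outside `{ρ ≤ D+Δ}`, so `W` puts mass at least `P(K) - D/(D+Δ)` on
`(K × Â) ∩ {ρ ≤ D+Δ}`, a set of `P × Q`-mass at most `P(K) Q(B(K,D+Δ)) < P(K) ε`. Gibbs' inequality
on the partition of `A × Â` into this set, the rest of `K × Â`, and `Kᶜ × Â` then gives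
`H(W ‖ P × Q) ≥ (P(K) - D/(D+Δ)) log(1/ε) - P(K) log 2`, the binary entropy being at most `log 2`.
For the empirical measures, `liminf P_{X₁ⁿ}(K) ≥ P(K)` almost surely by the lower half of the
pointwise ergodic theorem (Katznelson–Weiss), and letting `ε ↓ 0` makes the bound blow up.
-/

open Real

section BirkhoffLiminf

variable {α : Type*} {T : α → α} {f : α → ℝ}

lemma birkhoffSum_le_of_le_one (hf1 : ∀ x, f x ≤ 1) (n : ℕ) (x : α) :
    birkhoffSum T f n x ≤ n := by
  simpa [birkhoffSum] using Finset.sum_le_sum fun k (_ : k ∈ Finset.range n) => hf1 (T^[k] x)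

lemma birkhoffAverage_nonneg (hf0 : ∀ x, 0 ≤ f x) (n : ℕ) (x : α) :
    0 ≤ birkhoffAverage ℝ T f n x :=
  smul_nonneg (by positivity) (Finset.sum_nonneg fun k _ => hf0 _)

lemma birkhoffAverage_le_iff {n : ℕ} (hn : 0 < n) (x : α) {b : ℝ} :
    birkhoffAverage ℝ T f n x ≤ b ↔ birkhoffSum T f n x ≤ b * n := by
  rw [birkhoffAverage, smul_eq_mul, inv_mul_le_iff₀ (by positivity), mul_comm]

lemma birkhoffAverage_le_one (hf1 : ∀ x, f x ≤ 1) (n : ℕ) (x : α) :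
    birkhoffAverage ℝ T f n x ≤ 1 := by
  rcases n.eq_zero_or_pos with rfl | hn
  · simp
  · simpa [birkhoffAverage_le_iff hn] using birkhoffSum_le_of_le_one hf1 n x

/-- The orbit splits greedily into the given blocks, followed by a tail of length less than `N`. -/
lemma birkhoffSum_le_of_forall_exists_birkhoffSum_le (hf1 : ∀ x, f x ≤ 1) {a : ℝ} (ha : 0 ≤ a)
    {N : ℕ} (hblock : ∀ x, ∃ n, 0 < n ∧ n ≤ N ∧ birkhoffSum T f n x ≤ a * n) (L : ℕ) (x : α) :
    birkhoffSum T f L x ≤ a * L + N := by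
  induction L using Nat.strong_induction_on generalizing x with
  | _ L ih =>
    obtain ⟨n, hn0, hnN, hn⟩ := hblock x
    rcases le_or_gt n L with hnL | hLn
    · obtain ⟨m, rfl⟩ := Nat.exists_eq_add_of_le hnL
      have htail := ih m (by omega) (T^[n] x)
      rw [birkhoffSum_add]
      push_cast
      linarith
    · calc birkhoffSum T f L x ≤ L := birkhoffSum_le_of_le_one hf1 L x
        _ ≤ N := by exact_mod_cast (hLn.trans_le hnN).le
        _ ≤ a * L + N := le_add_of_nonneg_left (by positivity)

lemma liminf_birkhoffAverage_apply (hf0 : ∀ x, 0 ≤ f x) (hf1 : ∀ x, f x ≤ 1) (x : α) :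
    liminf (fun n => birkhoffAverage ℝ T f n (T x)) atTop =
      liminf (fun n => birkhoffAverage ℝ T f n x) atTop := by
  set d := fun n => birkhoffAverage ℝ T f n (T x) - birkhoffAverage ℝ T f n x
  have hd : Tendsto d atTop (𝓝 0) :=
    tendsto_birkhoffAverage_apply_sub_birkhoffAverage' ℝ
      ((Metric.isBounded_Icc (0 : ℝ) 1).subset (range_subset_iff.2 fun x => ⟨hf0 x, hf1 x⟩)) T x
  have hsplit : (fun n => birkhoffAverage ℝ T f n (T x)) =
      d + fun n => birkhoffAverage ℝ T f n x := by
    ext n; simp [d]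
  have hbdd : IsBoundedUnder (· ≥ ·) atTop fun n => birkhoffAverage ℝ T f n x :=
    isBoundedUnder_of ⟨0, fun n => birkhoffAverage_nonneg hf0 n x⟩
  have hcobdd : IsCoboundedUnder (· ≥ ·) atTop fun n => birkhoffAverage ℝ T f n x :=
    isCoboundedUnder_ge_of_le atTop fun n => birkhoffAverage_le_one hf1 n x
  rw [hsplit]
  refine le_antisymm ?_ ?_
  · simpa [hd.limsup_eq] using
      liminf_add_le hd.isBoundedUnder_ge hd.isBoundedUnder_le hbdd hcobdd
  · simpa [hd.liminf_eq] using
      le_liminf_add hd.isBoundedUnder_ge hd.isBoundedUnder_le hbdd hcobdd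

variable [MeasurableSpace α] {μ : Measure α}

lemma measurable_birkhoffAverage (hT : Measurable T) (hf : Measurable f) (n : ℕ) :
    Measurable (birkhoffAverage ℝ T f n) := by
  unfold birkhoffAverage birkhoffSum
  fun_prop

theorem MeasureTheory.MeasurePreserving.integral_birkhoffSum (hT : MeasurePreserving T μ μ)
    (hf : Integrable f μ) (n : ℕ) :
    ∫ x, birkhoffSum T f n x ∂μ = n * ∫ x, f x ∂μ := by
  have hcomp : ∀ k, ∫ x, f (T^[k] x) ∂μ = ∫ x, f x ∂μ := fun k => by
    rw [← integral_map (hT.iterate k).measurable.aemeasurable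
      (by rw [(hT.iterate k).map_eq]; exact hf.1), (hT.iterate k).map_eq]
  simp only [birkhoffSum]
  rw [integral_finsetSum (f := fun k x => f (T^[k] x)) _
    fun k _ => (hT.iterate k).integrable_comp_of_integrable hf]
  simp [hcomp]

lemma integral_le_of_birkhoffSum_le [IsProbabilityMeasure μ] (hT : MeasurePreserving T μ μ)
    (hf : Integrable f μ) {a C : ℝ} (h : ∀ L x, birkhoffSum T f L x ≤ a * L + C) :
    ∫ x, f x ∂μ ≤ a := by
  have hlim : Tendsto (fun L : ℕ => a + C / L) atTop (𝓝 a) := by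
    simpa using tendsto_const_nhds.add (tendsto_const_div_atTop_nhds_zero_nat C)
  refine ge_of_tendsto hlim ((eventually_gt_atTop 0).mono fun L hL => ?_)
  have hL' : (0 : ℝ) < L := by exact_mod_cast hL
  have hint : L * ∫ x, f x ∂μ ≤ a * L + C := by
    rw [← hT.integral_birkhoffSum hf]
    simpa [birkhoffSum] using integral_mono (integrable_finsetSum _ fun k _ =>
      (hT.iterate k).integrable_comp_of_integrable hf) (integrable_const _) (h L)
  rw [add_div' _ _ _ hL'.ne', le_div_iff₀ hL']
  linarith

lemma measurableSet_forall_lt_birkhoffAverage (hT : Measurable T) (hf : Measurable f) (b : ℝ)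
    (N : ℕ) : MeasurableSet {x | ∀ n, 0 < n → n ≤ N → b < birkhoffAverage ℝ T f n x} := by
  simp only [ofPred_forall]
  exact .iInter fun n => .iInter fun _ => .iInter fun _ =>
    measurableSet_lt measurable_const (measurable_birkhoffAverage hT hf n)

lemma tendsto_measure_forall_lt_birkhoffAverage [IsFiniteMeasure μ] (hT : Measurable T)
    (hf : Measurable f) (hf1 : ∀ x, f x ≤ 1) {b c : ℝ} (hcb : c < b)
    (hc : ∀ᵐ x ∂μ, liminf (fun n => birkhoffAverage ℝ T f n x) atTop ≤ c) :
    Tendsto (fun N => μ {x | ∀ n, 0 < n → n ≤ N → b < birkhoffAverage ℝ T f n x}) atTop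
      (𝓝 0) := by
  have hnull : μ (⋂ N : ℕ, {x | ∀ n, 0 < n → n ≤ N → b < birkhoffAverage ℝ T f n x}) = 0 := by
    refine measure_mono_null (fun x hx => ?_) (ae_iff.1 hc)
    simp only [mem_iInter, mem_ofPred_eq, not_le] at hx ⊢
    exact hcb.trans_le <| le_liminf_of_le
      (isCoboundedUnder_ge_of_le atTop fun n => birkhoffAverage_le_one hf1 n x)
      ((eventually_gt_atTop 0).mono fun n hn => (hx n n hn le_rfl).le)
  rw [← hnull]
  exact tendsto_measure_iInter_atTop
    (fun N => (measurableSet_forall_lt_birkhoffAverage hT hf b N).nullMeasurableSet)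
    (fun N M hNM x hx n hn hnM => hx n hn (hnM.trans hNM)) ⟨0, measure_ne_top μ _⟩

/-- Katznelson–Weiss: once `f` is set to zero on this set, every orbit decomposes into blocks of
length at most `N` and average at most `b`. -/
lemma integral_le_of_measureReal_forall_lt_birkhoffAverage_le [IsProbabilityMeasure μ]
    (hT : MeasurePreserving T μ μ) (hf : Measurable f) (hf0 : ∀ x, 0 ≤ f x)
    (hf1 : ∀ x, f x ≤ 1) {b : ℝ} (hb : 0 ≤ b) {N : ℕ} (hN : 0 < N) :
    ∫ x, f x ∂μ ≤
      b + μ.real {x | ∀ n, 0 < n → n ≤ N → b < birkhoffAverage ℝ T f n x} := by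
  set E := {x | ∀ n, 0 < n → n ≤ N → b < birkhoffAverage ℝ T f n x}
  have hE : MeasurableSet E := measurableSet_forall_lt_birkhoffAverage hT.measurable hf b N
  have hfi : Integrable f μ := .of_bound hf.aestronglyMeasurable 1
    (.of_forall fun x => by simp [abs_le, hf1 x, (hf0 x).trans'])
  set g := Eᶜ.indicator f
  have hgf : ∀ x, g x ≤ f x := indicator_le_self' fun x _ => hf0 x
  have hg1 : ∀ x, g x ≤ 1 := fun x => (hgf x).trans (hf1 x)
  have hblock : ∀ x, ∃ n, 0 < n ∧ n ≤ N ∧ birkhoffSum T g n x ≤ b * n := by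
    intro x
    by_cases hx : x ∈ E
    · exact ⟨1, one_pos, hN, by simp [g, birkhoffSum_one, hx, hb]⟩
    · simp only [E, mem_ofPred_eq, not_forall, not_lt] at hx
      obtain ⟨n, hn, hnN, hAn⟩ := hx
      refine ⟨n, hn, hnN, le_trans ?_ ((birkhoffAverage_le_iff hn x).1 hAn)⟩
      exact Finset.sum_le_sum fun k _ => hgf _
  have hg : ∫ x, g x ∂μ ≤ b := integral_le_of_birkhoffSum_le hT (hfi.indicator hE.compl)
    (birkhoffSum_le_of_forall_exists_birkhoffSum_le hg1 hb hblock)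
  have hfE : ∫ x in E, f x ∂μ ≤ μ.real E := by
    simpa using setIntegral_mono hfi.integrableOn (integrable_const 1).integrableOn hf1
  rw [← integral_add_compl hE hfi, ← integral_indicator hE.compl]
  linarith

theorem integral_le_of_ae_liminf_birkhoffAverage_le [IsProbabilityMeasure μ]
    (hT : MeasurePreserving T μ μ) (hf : Measurable f) (hf0 : ∀ x, 0 ≤ f x)
    (hf1 : ∀ x, f x ≤ 1) {c : ℝ}
    (hc : ∀ᵐ x ∂μ, liminf (fun n => birkhoffAverage ℝ T f n x) atTop ≤ c) :
    ∫ x, f x ∂μ ≤ c := by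
  have hc0 : 0 ≤ c := by
    obtain ⟨x, hx⟩ := hc.exists
    exact (le_liminf_of_le
      (isCoboundedUnder_ge_of_le atTop fun n => birkhoffAverage_le_one hf1 n x)
      (.of_forall fun n => birkhoffAverage_nonneg hf0 n x)).trans hx
  refine le_of_forall_pos_le_add fun δ hδ => ?_
  obtain ⟨N, hNE, hN⟩ := (((tendsto_measure_forall_lt_birkhoffAverage hT.measurable hf hf1
    (half_pos hδ |> lt_add_of_pos_right c) hc).eventually
    (gt_mem_nhds (ENNReal.ofReal_pos.2 (half_pos hδ)))).and (eventually_gt_atTop 0)).exists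
  have := integral_le_of_measureReal_forall_lt_birkhoffAverage_le hT hf hf0 hf1
    (by positivity : 0 ≤ c + δ / 2) hN
  have hE := ENNReal.toReal_le_of_le_ofReal (half_pos hδ).le hNE.le
  rw [measureReal_def] at this
  linarith

theorem Ergodic.ae_integral_le_liminf_birkhoffAverage [IsProbabilityMeasure μ] (hT : Ergodic T μ)
    (hf : Measurable f) (hf0 : ∀ x, 0 ≤ f x) (hf1 : ∀ x, f x ≤ 1) :
    ∀ᵐ x ∂μ, ∫ y, f y ∂μ ≤ liminf (fun n => birkhoffAverage ℝ T f n x) atTop := by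
  obtain ⟨c, hc⟩ := hT.toPreErgodic.ae_eq_const_of_ae_eq_comp
    (Measurable.liminf fun n => measurable_birkhoffAverage hT.measurable hf n)
    (funext fun x => liminf_birkhoffAverage_apply hf0 hf1 x)
  have hfc := integral_le_of_ae_liminf_birkhoffAverage_le hT.toMeasurePreserving hf hf0 hf1
    (hc.mono fun x hx => hx.le)
  filter_upwards [hc] with x hx
  exact hfc.trans_eq hx.symm

end BirkhoffLiminf

theorem mul_log_le_setIntegral_llr {X : Type*} [MeasurableSpace X] {W ν : Measure X}
    [IsFiniteMeasure W] [IsFiniteMeasure ν] (hac : W ≪ ν) (hint : Integrable (llr W ν) W)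
    {s : Set X} {t : ℝ} (ht : ν.real s ≤ t) :
    W.real s * log (W.real s / t) ≤ ∫ x in s, llr W ν x ∂W := by
  by_cases hW0 : W s = 0
  · simp [measureReal_def, hW0, Measure.restrict_eq_zero.2 hW0]
  have ha : 0 < W.real s := ENNReal.toReal_pos hW0 (measure_ne_top _ _)
  have hν : 0 < ν.real s := ENNReal.toReal_pos (fun h => hW0 (hac h)) (measure_ne_top _ _)
  have ht0 : 0 < t := hν.trans_le ht
  set c := W.real s / t
  have hc : 0 < c := div_pos ha ht0
  have hct : c * t = W.real s := div_mul_cancel₀ _ ht0.ne'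
  set g := fun x => (ν.rnDeriv W x).toReal
  have hgi : IntegrableOn g s W := Measure.integrable_toReal_rnDeriv.integrableOn
  -- `log y ≤ y - 1` at `y = c · dν/dW`
  have hpt : ∀ᵐ x ∂W, 1 + log c - c * g x ≤ llr W ν x := by
    filter_upwards [exp_neg_llr hac] with x hx
    have := add_one_le_exp (log c - llr W ν x)
    rw [exp_sub, exp_log hc, div_eq_mul_inv, ← exp_neg] at this
    simp only [g, ← hx]
    linarith
  have hgs : ∫ x in s, g x ∂W ≤ t :=
    (Measure.setIntegral_toReal_rnDeriv_le (measure_ne_top _ _)).trans ht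
  calc W.real s * log c = W.real s * (1 + log c) - c * t := by
        rw [hct]; ring
    _ ≤ ∫ x in s, (1 + log c - c * g x) ∂W := by
        rw [integral_sub (integrable_const _) (hgi.const_mul c), integral_const_mul,
          setIntegral_const, smul_eq_mul]
        linarith [mul_le_mul_of_nonneg_left hgs hc.le]
    _ ≤ ∫ x in s, llr W ν x ∂W :=
        integral_mono_ae ((integrable_const _).sub (hgi.const_mul c)) hint.integrableOn
          (ae_restrict_of_ae hpt)

lemma neg_mul_log_two_le_mul_log_div_add {w u : ℝ} (hw : 0 ≤ w) (hu : 0 ≤ u) :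
    -((w + u) * log 2) ≤ w * log (w / (w + u)) + u * log (u / (w + u)) := by
  rcases (add_nonneg hw hu).eq_or_lt with h0 | hp
  · simp [← h0]
  have hq : 1 - w / (w + u) = u / (w + u) := by field_simp; ring
  have h := mul_le_mul_of_nonneg_left (binEntropy_le_log_two (p := w / (w + u))) hp.le
  rw [binEntropy, log_inv, log_inv, hq] at h
  have e : (w + u) * (w / (w + u) * -log (w / (w + u)) + u / (w + u) * -log (u / (w + u))) =
      -(w * log (w / (w + u)) + u * log (u / (w + u))) := by field_simp; ring
  linarith

lemma sub_mul_log_inv_sub_mul_log_two_le {w u p c ε : ℝ} (hw : 0 ≤ w) (hu : 0 ≤ u)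
    (hwu : w + u = p) (huc : u ≤ c) (hε0 : 0 < ε) (hε1 : ε ≤ 1) :
    (p - c) * log ε⁻¹ - p * log 2 ≤ w * log (w / (p * ε)) + u * log (u / p) := by
  subst hwu
  have hL : 0 ≤ log ε⁻¹ := log_nonneg (one_le_inv₀ hε0 |>.2 hε1)
  have hsplit : w * log (w / ((w + u) * ε)) = w * log (w / (w + u)) + w * log ε⁻¹ := by
    rcases hw.eq_or_lt with rfl | hw'
    · simp
    rw [← mul_add, ← log_mul (by positivity) (by positivity), div_mul_eq_div_div,
      div_eq_mul_inv _ ε]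
  have hentropy := neg_mul_log_two_le_mul_log_div_add hw hu
  have hcL := mul_le_mul_of_nonneg_right huc hL
  linarith

section RateLowerBound

variable {A B : Type*} [MeasurableSpace A] [MeasurableSpace B] {ρ : A → B → ℝ}

lemma measure_lt_distortion_le_of_mem_Wset (hρ : Measurable (Function.uncurry ρ))
    {P : Measure A} {D : ℝ} {W : Measure (A × B)} (hW : W ∈ Wset ρ P D) {M : ℝ} (hM : 0 < M) :
    W {q | M < ρ q.1 q.2} ≤ ENNReal.ofReal (D / M) :=
  calc W {q | M < ρ q.1 q.2}
      ≤ W {q | ENNReal.ofReal M ≤ ENNReal.ofReal (ρ q.1 q.2)} :=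
        measure_mono fun q hq => ENNReal.ofReal_le_ofReal (le_of_lt hq)
    _ ≤ (∫⁻ q, ENNReal.ofReal (ρ q.1 q.2) ∂W) / ENNReal.ofReal M :=
        meas_ge_le_lintegral_div hρ.ennreal_ofReal.aemeasurable (by simp [hM]) ENNReal.ofReal_ne_top
    _ ≤ ENNReal.ofReal D / ENNReal.ofReal M := by gcongr; exact hW.2.2
    _ = ENNReal.ofReal (D / M) := (ENNReal.ofReal_div_of_pos hM).symm

lemma prod_fst_preimage_inter_le (P : Measure A) (Q : Measure B) [SFinite Q] (K : Set A) (M : ℝ) :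
    P.prod Q (Prod.fst ⁻¹' K ∩ {q | ρ q.1 q.2 ≤ M}) ≤ P K * Q (Bset ρ K M) :=
  (measure_mono (show _ ⊆ K ×ˢ Bset ρ K M from fun q hq => ⟨hq.1, q.1, hq.1, hq.2⟩)).trans_eq
    (Measure.prod_prod _ _)

theorem le_RQ_of_measure_Bset_lt (hρ : Measurable (Function.uncurry ρ)) (P : Measure A)
    (Q : Measure B) [IsProbabilityMeasure Q] {D Δ : ℝ} (hD : 0 ≤ D) (hΔ : 0 < Δ) {K : Set A}
    (hK : MeasurableSet K) {ε : ℝ} (hε0 : 0 < ε) (hε1 : ε ≤ 1)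
    (hQ : Q (Bset ρ K (D + Δ)) < ENNReal.ofReal ε) :
    ENNReal.ofReal ((P.real K - D / (D + Δ)) * log ε⁻¹ - P.real K * log 2) ≤ RQ ρ P Q D := by
  refine le_iInf₂ fun W hW => ?_
  have : IsProbabilityMeasure W := hW.1
  have : IsProbabilityMeasure P := hW.2.1 ▸ inferInstance
  unfold relEnt
  split_ifs with h
  swap; · exact le_top
  obtain ⟨hac, hint⟩ := h
  refine ENNReal.ofReal_le_ofReal ?_
  set ν := P.prod Q
  set K₁ : Set (A × B) := Prod.fst ⁻¹' K
  set G := {q : A × B | ρ q.1 q.2 ≤ D + Δ}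
  have hK₁ : MeasurableSet K₁ := hK.preimage measurable_fst
  have hG : MeasurableSet G := hρ measurableSet_Iic
  have hWK₁ : W.real K₁ = P.real K := by
    rw [measureReal_def, measureReal_def, ← Measure.fst_apply hK, hW.2.1]
  have hνK₁ : ν.real K₁ = P.real K := by
    rw [measureReal_def, measureReal_def, ← Measure.fst_apply hK, Measure.fst_prod]
  have hgood : ν.real (K₁ ∩ G) ≤ P.real K * ε := by
    refine ENNReal.toReal_le_of_le_ofReal (by positivity)
      ((prod_fst_preimage_inter_le P Q K _).trans ?_)
    rw [ENNReal.ofReal_mul measureReal_nonneg, ofReal_measureReal]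
    gcongr
  have hbad : W.real (K₁ \ G) ≤ D / (D + Δ) :=
    ENNReal.toReal_le_of_le_ofReal (div_nonneg hD (by linarith))
      ((measure_mono (show K₁ \ G ⊆ {q | D + Δ < ρ q.1 q.2} from
        fun _ hq => by simpa [G] using hq.2)).trans
        (measure_lt_distortion_le_of_mem_Wset hρ hW (by linarith : 0 < D + Δ)))
  have hrest : W.real K₁ᶜ * log (W.real K₁ᶜ / ν.real K₁ᶜ) = 0 := by
    rw [measureReal_compl hK₁, measureReal_compl hK₁, hWK₁, hνK₁]
    rcases eq_or_ne (1 - P.real K) 0 with h | h <;> simp [h]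
  have h₁ := mul_log_le_setIntegral_llr hac hint hgood
  have h₂ := mul_log_le_setIntegral_llr hac hint
    ((measureReal_mono (sdiff_subset (t := G))).trans hνK₁.le)
  have h₃ := mul_log_le_setIntegral_llr hac hint (le_refl (ν.real K₁ᶜ))
  have hcore := sub_mul_log_inv_sub_mul_log_two_le (w := W.real (K₁ ∩ G)) measureReal_nonneg
    measureReal_nonneg (by rw [measureReal_inter_add_sdiff hG, hWK₁]) hbad hε0 hε1
  rw [← integral_add_compl hK₁ hint, ← integral_inter_add_sdiff hG hint.integrableOn]
  linarith

end RateLowerBound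

lemma shift_iterate_apply {A : Type*} (k : ℕ) (x : ℕ → A) (n : ℕ) :
    shift^[k] x n = x (n + k) := by
  induction k generalizing x with
  | zero => rfl
  | succ k ih => rw [Function.iterate_succ_apply, ih]; simp [shift, add_assoc]

section EmpiricalMeasure

variable {A : Type*} [MeasurableSpace A] {s : Set A}

lemma empMeas_real_eq_birkhoffAverage (hs : MeasurableSet s) (x : ℕ → A) (n : ℕ) :
    (empMeas x n).real s = birkhoffAverage ℝ shift (fun y => s.indicator 1 (y 0)) n x := by
  have h : ∀ a, (s.indicator (1 : A → ℝ≥0∞) a).toReal = s.indicator 1 a := fun a => by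
    by_cases ha : a ∈ s <;> simp [ha]
  simp only [measureReal_def, empMeas, Measure.smul_apply, Measure.finsetSum_apply,
    Measure.dirac_apply' _ hs, smul_eq_mul, ENNReal.toReal_mul, ENNReal.toReal_inv,
    ENNReal.toReal_natCast, birkhoffAverage, birkhoffSum, shift_iterate_apply, zero_add]
  rw [ENNReal.toReal_sum fun k _ => by by_cases hk : x k ∈ s <;> simp [hk]]
  simp [h]

theorem ae_measureReal_le_liminf_empMeas {μ : Measure (ℕ → A)} [IsProbabilityMeasure μ]
    (herg : Ergodic shift μ) (hs : MeasurableSet s) :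
    ∀ᵐ x ∂μ, (μ.map (· 0)).real s ≤ liminf (fun n => (empMeas x n).real s) atTop := by
  have hf : Measurable fun y : ℕ → A => s.indicator (1 : A → ℝ) (y 0) :=
    (measurable_one.indicator hs).comp (measurable_pi_apply 0)
  have hint : ∫ y, s.indicator (1 : A → ℝ) (y 0) ∂μ = (μ.map (· 0)).real s := by
    rw [← integral_indicator_one hs, integral_map (measurable_pi_apply 0).aemeasurable
      (measurable_one.indicator hs).aestronglyMeasurable]
  simpa [hint, empMeas_real_eq_birkhoffAverage hs] using
    herg.ae_integral_le_liminf_birkhoffAverage hf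
      (fun y => indicator_nonneg (fun _ _ => zero_le_one) (y 0))
      (fun y => indicator_apply_le' (fun _ => le_rfl) fun _ => zero_le_one)

lemma empMeas_real_le_one (hs : MeasurableSet s) (x : ℕ → A) (n : ℕ) :
    (empMeas x n).real s ≤ 1 := by
  rw [empMeas_real_eq_birkhoffAverage hs]
  exact birkhoffAverage_le_one
    (fun y => indicator_apply_le' (f := 1) (a := y 0) (fun _ => le_rfl) fun _ => zero_le_one) n x

end EmpiricalMeasure

lemma Monotone.le_liminf_of_le_liminf {ι : Type*} {l : Filter ι} [l.NeBot] {u : ι → ℝ}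
    (hbdd : IsBoundedUnder (· ≥ ·) l u) (hcobdd : IsCoboundedUnder (· ≥ ·) l u) {g : ℝ → ℝ≥0∞}
    (hg : Monotone g) (hgc : Continuous g) {a : ℝ} (ha : a ≤ liminf u l) {F : ι → ℝ≥0∞}
    (hF : ∀ i, g (u i) ≤ F i) : g a ≤ liminf F l :=
  calc g a ≤ g (liminf u l) := hg ha
    _ = liminf (g ∘ u) l := hg.map_liminf_of_continuousAt u hgc.continuousAt hcobdd hbdd
    _ ≤ liminf F l := liminf_le_liminf (.of_forall hF)

lemma ae_iSup_eq_top_of_tendsto {Ω : Type*} [MeasurableSpace Ω] {μ : Measure Ω}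
    {G : ℝ → Ω → ℝ≥0∞} {b : ℝ → ℝ} (hb : Tendsto b (𝓝[>] 0) atTop)
    (hG : ∀ ε ∈ Ioo (0 : ℝ) 1, ∀ᵐ ω ∂μ, ENNReal.ofReal (b ε) ≤ G ε ω) :
    ∀ᵐ ω ∂μ, ⨆ ε ∈ Ioo (0 : ℝ) 1, G ε ω = ⊤ := by
  set ε : ℕ → ℝ := fun k => 1 / ((k + 1 : ℕ) + 1 : ℝ)
  have hε : ∀ k, ε k ∈ Ioo (0 : ℝ) 1 := fun k =>
    ⟨by positivity, (div_lt_one (by positivity)).2 (lt_add_of_pos_left 1 (by positivity))⟩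
  have hεlim : Tendsto ε atTop (𝓝[>] 0) :=
    tendsto_nhdsWithin_iff.2 ⟨tendsto_one_div_add_atTop_nhds_zero_nat.comp
      (tendsto_add_atTop_nat 1), .of_forall fun k => (hε k).1⟩
  filter_upwards [ae_all_iff.2 fun k => hG (ε k) (hε k)] with ω hω
  exact top_le_iff.1 <| le_of_tendsto (ENNReal.tendsto_ofReal_atTop.comp (hb.comp hεlim))
    (.of_forall fun k => (hω k).trans (le_iSup₂ (f := fun ε _ => G ε ω) (ε k) (hε k)))

lemma tendsto_mul_log_sub_mul_log_two_mul {c p : ℝ} (hcp : c < p) :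
    Tendsto (fun ε => c * log ε - p * log (2 * ε)) (𝓝[>] 0) atTop := by
  have h : Tendsto (fun ε => (p - c) * -log ε - p * log 2) (𝓝[>] 0) atTop :=
    tendsto_atTop_add_const_right _ _
      ((tendsto_neg_atBot_atTop.comp tendsto_log_nhdsGT_zero).const_mul_atTop (sub_pos.2 hcp))
  refine h.congr' (eventually_nhdsWithin_of_forall fun ε (hε : 0 < ε) => ?_)
  dsimp only
  rw [log_mul two_ne_zero hε.ne']
  ring

theorem le_liminf_iInf_RQ {A B Θ : Type*} [MeasurableSpace A] [MeasurableSpace B]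
    {ρ : A → B → ℝ} (hρ : Measurable (Function.uncurry ρ)) {Q : Θ → Measure B}
    (hQ : ∀ θ, IsProbabilityMeasure (Q θ)) {D Δ : ℝ} (hD : 0 ≤ D) (hΔ : 0 < Δ) {K : Set A}
    (hK : MeasurableSet K) {ε : ℝ} (hε : ε ∈ Ioo (0 : ℝ) 1) {x : ℕ → A} {p : ℝ} (hp0 : 0 ≤ p)
    (hp : p ≤ liminf (fun n => (empMeas x n).real K) atTop) :
    ENNReal.ofReal (D / (D + Δ) * log ε - p * log (2 * ε)) ≤
      liminf (fun n => ⨅ (θ : Θ) (_ : ¬ ENNReal.ofReal ε ≤ Q θ (Bset ρ K (D + Δ))),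
        RQ ρ (empMeas x n) (Q θ) D) atTop := by
  have hbound : D / (D + Δ) * log ε - p * log (2 * ε) =
      (p - D / (D + Δ)) * log ε⁻¹ - p * log 2 := by
    rw [log_mul two_ne_zero hε.1.ne', log_inv]; ring
  rw [hbound]
  have hc : 0 ≤ D / (D + Δ) := div_nonneg hD (by linarith)
  have hL : 0 ≤ log ε⁻¹ := log_nonneg ((one_le_inv₀ hε.1).2 hε.2.le)
  rcases lt_or_ge (log ε⁻¹) (log 2) with hsmall | hlarge
  · rw [ENNReal.ofReal_of_nonpos (by nlinarith [mul_nonneg hc hL])]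
    exact zero_le
  refine Monotone.le_liminf_of_le_liminf
    (g := fun t => ENNReal.ofReal ((t - D / (D + Δ)) * log ε⁻¹ - t * log 2))
    (isBoundedUnder_of ⟨0, fun n => measureReal_nonneg⟩)
    (isCoboundedUnder_ge_of_le atTop (empMeas_real_le_one hK x))
    (fun a b hab => ENNReal.ofReal_le_ofReal (by nlinarith))
    (ENNReal.continuous_ofReal.comp (by fun_prop)) hp fun n => le_iInf₂ fun θ hθ => ?_
  have := hQ θ
  exact le_RQ_of_measure_Bset_lt hρ _ _ hD hΔ hK hε.1 hε.2.le (not_le.1 hθ)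

theorem Teps_complement_blows_up_general
    {A B Θ : Type*} [MeasurableSpace A] [MeasurableSpace B]
    (ρ : A → B → ℝ) (hρmeas : Measurable (Function.uncurry ρ))
    (Q : Θ → Measure B) (hQ : ∀ θ, IsProbabilityMeasure (Q θ))
    (μ : Measure (ℕ → A)) [IsProbabilityMeasure μ]
    (herg : Ergodic shift μ)
    (P : Measure A) (hP : P = μ.map (fun ω => ω 0))
    (D : ℝ) (hD : 0 ≤ D) (Δ : ℝ) (hΔ : 0 < Δ)
    (K : Set A) (hK : MeasurableSet K)
    (hPK : ENNReal.ofReal (D / (D + Δ)) < P K) :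
    (∀ ε ∈ Set.Ioo (0:ℝ) 1, ∀ᵐ ω ∂μ,
      ENNReal.ofReal (D / (D + Δ) * Real.log ε - (P K).toReal * Real.log (2 * ε))
        ≤ liminf
          (fun n => ⨅ (θ : Θ) (_ : ¬ ENNReal.ofReal ε ≤ Q θ (Bset ρ K (D + Δ))),
            RQ ρ (empMeas ω n) (Q θ) D) atTop)
    ∧ (∀ᵐ ω ∂μ,
      (⨆ (ε : ℝ) (_ : ε ∈ Set.Ioo (0:ℝ) 1),
        liminf
          (fun n => ⨅ (θ : Θ) (_ : ¬ ENNReal.ofReal ε ≤ Q θ (Bset ρ K (D + Δ))),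
            RQ ρ (empMeas ω n) (Q θ) D) atTop) = ⊤) := by
  have : IsProbabilityMeasure P :=
    hP ▸ Measure.isProbabilityMeasure_map (measurable_pi_apply 0).aemeasurable
  have hcp : D / (D + Δ) < P.real K :=
    (ENNReal.ofReal_lt_iff_lt_toReal (div_nonneg hD (by linarith)) (measure_ne_top _ _)).1 hPK
  have hlow := fun ε (hε : ε ∈ Ioo (0 : ℝ) 1) =>
    (hP ▸ ae_measureReal_le_liminf_empMeas herg hK).mono fun ω hω =>
      le_liminf_iInf_RQ (Θ := Θ) hρmeas hQ hD hΔ hK hε measureReal_nonneg hω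
  exact ⟨hlow, ae_iSup_eq_top_of_tendsto (tendsto_mul_log_sub_mul_log_two_mul hcp) hlow⟩

/-- The key estimate in the proof that P2 implies A2: with
`T_ε = {θ : Q_θ(B(K,D+Δ)) ≥ ε}` one has, for each `ε ∈ (0,1)`, a.s.
`liminf_n inf_{θ ∈ T_εᶜ} R₁(P_{X₁ⁿ},Q_θ,D) ≥ (D/(D+Δ)) log ε − P(K) log(2ε)`, and
consequently a.s. `lim_{ε↓0} liminf_n inf_{θ ∈ T_εᶜ} R₁(P_{X₁ⁿ},Q_θ,D) = ∞`
(the monotone limit in `ε` being the supremum over `ε ∈ (0,1)`). -/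
theorem Teps_complement_blows_up
    {A B Θ : Type*} [MeasurableSpace A] [MeasurableSpace B]
    [StandardBorelSpace A] [StandardBorelSpace B]
    (ρ : A → B → ℝ) (hρmeas : Measurable (Function.uncurry ρ))
    (hρnn : ∀ x y, 0 ≤ ρ x y)
    (Q : Θ → Measure B) (hQ : ∀ θ, IsProbabilityMeasure (Q θ))
    (μ : Measure (ℕ → A)) [IsProbabilityMeasure μ]
    (herg : Ergodic shift μ)
    (P : Measure A) (hP : P = μ.map (fun ω => ω 0))
    (D : ℝ) (hD : 0 ≤ D) (Δ : ℝ) (hΔ : 0 < Δ)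
    (K : Set A) (hK : MeasurableSet K)
    (hPK : ENNReal.ofReal (D / (D + Δ)) < P K) :
    (∀ ε ∈ Set.Ioo (0:ℝ) 1, ∀ᵐ ω ∂μ,
      ENNReal.ofReal (D / (D + Δ) * Real.log ε - (P K).toReal * Real.log (2 * ε))
        ≤ liminf
          (fun n => ⨅ (θ : Θ) (_ : ¬ ENNReal.ofReal ε ≤ Q θ (Bset ρ K (D + Δ))),
            RQ ρ (empMeas ω n) (Q θ) D) atTop)
    ∧ (∀ᵐ ω ∂μ,
      (⨆ (ε : ℝ) (_ : ε ∈ Set.Ioo (0:ℝ) 1),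
        liminf
          (fun n => ⨅ (θ : Θ) (_ : ¬ ENNReal.ofReal ε ≤ Q θ (Bset ρ K (D + Δ))),
            RQ ρ (empMeas ω n) (Q θ) D) atTop) = ⊤) :=
  Teps_complement_blows_up_general ρ hρmeas Q hQ μ herg P hP D hD Δ hΔ K hK hPK
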